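/- arXiv:1306.6462 — 4 statements merged into one kernel-verified Lean document; each statement's English description precedes it below -/
import Mathlib

section
/- Let η be a finite measure on a measurable space E and V: E → ℝ a bounded measurable potential. Then the function λ ↦ ESS(η, e^{-λV}) := η(e^{-λV})² / η(e^{-2λV}) is non-increasing on [0, ∞). -/
/-!
Write `Z(l) = η(e^{-lV})`, so that `ESS(l) = exp (2 log Z(l) - log Z(2l))`. By Hölder's inequality
`log Z` is convex, and for a convex `φ` and `0 ≤ a < b` the secant slope of `φ` over `[a, b]` is at
most the one over `[2a, 2b]`, i.e. `2 (φ b - φ a) ≤ φ (2b) - φ (2a)`, so `2 φ l - φ (2 l)` is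
non-increasing.
-/

open MeasureTheory Real

lemma exp_mul_mul_rpow_one_div {c : ℝ} (hc : c ≠ 0) (t x : ℝ) :
    exp (c * t * x) ^ (1 / c) = exp (t * x) := by
  rw [← exp_mul]
  congr 1
  field_simp

namespace ProbabilityTheory

variable {Ω : Type*} [MeasurableSpace Ω] {μ : Measure Ω} {X : Ω → ℝ} {t : ℝ}

lemma memLp_exp_mul (hX : AEMeasurable X μ) (ht : Integrable (fun ω ↦ exp (t * X ω)) μ)
    {c : ℝ} (hc : 0 < c) : MemLp (fun ω ↦ exp (c * t * X ω)) (ENNReal.ofReal (1 / c)) μ := by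
  have hp : ENNReal.ofReal (1 / c) ≠ 0 := by simpa using hc
  rw [← memLp_norm_rpow_iff (aemeasurable_exp_mul _ hX) hp ENNReal.ofReal_ne_top,
    ENNReal.div_self hp ENNReal.ofReal_ne_top, memLp_one_iff_integrable,
    ENNReal.toReal_ofReal (by positivity)]
  refine ht.congr (ae_of_all _ fun ω ↦ ?_)
  simp only [norm_of_nonneg (exp_pos _).le, exp_mul_mul_rpow_one_div hc.ne']

lemma mgf_add_mul_le (hX : AEMeasurable X μ) {u v : ℝ}
    (hu : Integrable (fun ω ↦ exp (u * X ω)) μ) (hv : Integrable (fun ω ↦ exp (v * X ω)) μ)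
    {a b : ℝ} (ha : 0 < a) (hb : 0 < b) (hab : a + b = 1) :
    mgf X μ (a * u + b * v) ≤ mgf X μ u ^ a * mgf X μ v ^ b := by
  -- Hölder's inequality with the conjugate exponents `1 / a` and `1 / b`
  have H := integral_mul_le_Lp_mul_Lq_of_nonneg (holderConjugate_one_div ha hb hab)
    (ae_of_all _ fun _ ↦ (exp_pos _).le) (ae_of_all _ fun _ ↦ (exp_pos _).le)
    (memLp_exp_mul hX hu ha) (memLp_exp_mul hX hv hb)
  simpa only [mgf, exp_mul_mul_rpow_one_div ha.ne', exp_mul_mul_rpow_one_div hb.ne',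
    one_div_one_div, ← exp_add, add_mul] using H

lemma convexOn_cgf [NeZero μ] (hX : AEMeasurable X μ) :
    ConvexOn ℝ (integrableExpSet X μ) (cgf X μ) := by
  refine convexOn_iff_forall_pos.2 ⟨convex_integrableExpSet, fun u hu v hv a b ha hb hab ↦ ?_⟩
  have hu' := mgf_pos_iff.2 hu
  have hv' := mgf_pos_iff.2 hv
  calc cgf X μ (a • u + b • v) = log (mgf X μ (a * u + b * v)) := rfl
    _ ≤ log (mgf X μ u ^ a * mgf X μ v ^ b) :=
      log_le_log (mgf_pos_iff.2 (convex_integrableExpSet hu hv ha.le hb.le hab))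
        (mgf_add_mul_le hX hu hv ha hb hab)
    _ = a • cgf X μ u + b • cgf X μ v := by
      rw [log_mul (rpow_pos_of_pos hu' _).ne' (rpow_pos_of_pos hv' _).ne', log_rpow hu',
        log_rpow hv']
      rfl

lemma sq_mgf_div_mgf_two_mul [NeZero μ] (ht : Integrable (fun ω ↦ exp (t * X ω)) μ)
    (h2t : Integrable (fun ω ↦ exp (2 * t * X ω)) μ) :
    mgf X μ t ^ 2 / mgf X μ (2 * t) = exp (2 * cgf X μ t - cgf X μ (2 * t)) := by
  rw [exp_sub, exp_cgf h2t, ← exp_cgf ht, ← exp_nat_mul]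
  norm_num

end ProbabilityTheory

lemma ConvexOn.antitoneOn_const_mul_sub_comp_const_mul {φ : ℝ → ℝ}
    (hφ : ConvexOn ℝ (Set.Ici 0) φ) {c : ℝ} (hc : 1 ≤ c) :
    AntitoneOn (fun x ↦ c * φ x - φ (c * x)) (Set.Ici 0) := by
  intro a (ha : 0 ≤ a) b (hb : 0 ≤ b) hab
  rcases hab.eq_or_lt with rfl | hab
  · rfl
  have hca : a ≤ c * a := le_mul_of_one_le_left ha hc
  have hcb : b ≤ c * b := le_mul_of_one_le_left hb hc
  have hcab : c * a < c * b := mul_lt_mul_of_pos_left hab (by linarith)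
  have hslope : slope φ a b ≤ slope φ (c * a) (c * b) :=
    calc slope φ a b
        ≤ slope φ a (c * b) :=
          hφ.slope_mono ha ⟨hb, hab.ne'⟩ ⟨hb.trans hcb, (hab.trans_le hcb).ne'⟩ hcb
      _ = slope φ (c * b) a := slope_comm _ _ _
      _ ≤ slope φ (c * b) (c * a) := hφ.slope_mono (hb.trans hcb) ⟨ha, (hab.trans_le hcb).ne⟩
          ⟨ha.trans hca, hcab.ne⟩ hca
      _ = slope φ (c * a) (c * b) := slope_comm _ _ _
  rw [slope_def_field, slope_def_field, div_le_div_iff₀ (by linarith) (by linarith)] at hslope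
  have hba : 0 < b - a := sub_pos.2 hab
  show c * φ b - φ (c * b) ≤ c * φ a - φ (c * a)
  nlinarith

open ProbabilityTheory in
/-- The effective sample size `λ ↦ ESS(η, e^{-λV}) = η(e^{-λV})² / η(e^{-2λV})`
is non-increasing on `[0, ∞)` for a finite measure `η` and bounded measurable `V`. -/
theorem ess_antitoneOn {E : Type*} [MeasurableSpace E] (η : Measure E) [IsFiniteMeasure η]
    (V : E → ℝ) (hVmeas : Measurable V) (C : ℝ) (hVbdd : ∀ x, |V x| ≤ C) :
    AntitoneOn (fun l : ℝ =>
      (∫ x, Real.exp (-l * V x) ∂η) ^ 2 / ∫ x, Real.exp (-(2 * l) * V x) ∂η)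
      (Set.Ici 0) := by
  rcases eq_or_ne η 0 with rfl | hη
  · simpa using antitoneOn_const
  have : NeZero η := ⟨hη⟩
  have hint : ∀ t ∈ Set.Ici (0 : ℝ), t ∈ integrableExpSet (-V) η := fun t ht ↦
    integrable_exp_mul_of_le t C ht hVmeas.neg.aemeasurable
      (ae_of_all _ fun x ↦ (neg_le_abs (V x)).trans (hVbdd x))
  have hconv : ConvexOn ℝ (Set.Ici 0) (cgf (-V) η) :=
    (convexOn_cgf hVmeas.neg.aemeasurable).subset hint (convex_Ici 0)
  intro a ha b hb hab
  have hess : ∀ l ∈ Set.Ici (0 : ℝ),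
      (∫ x, exp (-l * V x) ∂η) ^ 2 / ∫ x, exp (-(2 * l) * V x) ∂η =
        exp (2 * cgf (-V) η l - cgf (-V) η (2 * l)) := fun l hl ↦ by
    rw [← sq_mgf_div_mgf_two_mul (hint l hl) (hint _ (by simpa using hl))]
    simp only [mgf, Pi.neg_apply, neg_mul_comm]
  simp only [hess a ha, hess b hb]
  exact exp_monotone (hconv.antitoneOn_const_mul_sub_comp_const_mul one_le_two ha hb hab)
end

section
/- Let η be a probability measure on a measurable space E and V: E → ℝ a bounded measurable potential. If X, Y are independent random variables each distributed according to η and P[V(X) ≠ V(Y)] > 0, then the function λ ↦ ESS(η, e^{-λV}) := η(e^{-λV})² / η(e^{-2λV}) is strictly decreasing on (0, ∞). -/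
open MeasureTheory

private lemma ess_exp_identity (A B : ℝ) :
    (Real.exp A - Real.exp B)^2
      = Real.exp (2*A) + Real.exp (2*B) - 2 * Real.exp (A + B) := by
  have e1 : Real.exp (2*A) = Real.exp A ^ 2 := by rw [two_mul, Real.exp_add, sq]
  have e2 : Real.exp (2*B) = Real.exp B ^ 2 := by rw [two_mul, Real.exp_add, sq]
  rw [e1, e2, Real.exp_add]; ring

private lemma ess_factor_identity (p q a b : ℝ) :
    Real.exp (-(a*p)) * Real.exp (-(2*b*q)) + Real.exp (-(2*b*p)) * Real.exp (-(a*q))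
      - Real.exp (-(2*a*p)) * Real.exp (-((2*b-a)*q))
      - Real.exp (-((2*b-a)*p)) * Real.exp (-(2*a*q))
    = (Real.exp (-(a*p)) - Real.exp (-(a*q)))
        * (Real.exp (-((2*b-2*a)*p)) - Real.exp (-((2*b-2*a)*q)))
        * Real.exp (-(a*(p+q))) := by
  simp only [sub_mul, mul_sub, ← Real.exp_add]
  ring_nf

/-- If `V` is not `η`-a.s. constant (i.e. for `X, Y` i.i.d. with law `η`,
`P[V(X) ≠ V(Y)] > 0`), then `λ ↦ ESS(η, e^{-λV})` is strictly decreasing on `(0, ∞)`. -/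
theorem ess_strictAntiOn {E : Type*} [MeasurableSpace E] (η : Measure E)
    [IsProbabilityMeasure η]
    (V : E → ℝ) (hVmeas : Measurable V) (C : ℝ) (hVbdd : ∀ x, |V x| ≤ C)
    (hne : 0 < (η.prod η) {p : E × E | V p.1 ≠ V p.2}) :
    StrictAntiOn (fun l : ℝ =>
      (∫ x, Real.exp (-l * V x) ∂η) ^ 2 / ∫ x, Real.exp (-(2 * l) * V x) ∂η)
      (Set.Ioi 0) := by
  -- the one-variable exponential integrals
  set g : ℝ → ℝ := fun l => ∫ x, Real.exp (-(l * V x)) ∂η with hgdef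
  have hint : ∀ l : ℝ, Integrable (fun x => Real.exp (-(l * V x))) η := by
    intro l
    refine ⟨((hVmeas.const_mul l).neg.exp).aestronglyMeasurable, ?_⟩
    refine HasFiniteIntegral.of_bounded (C := Real.exp (|l| * C)) ?_
    filter_upwards with x
    rw [Real.norm_eq_abs, abs_of_pos (Real.exp_pos _)]
    apply Real.exp_le_exp.2
    calc -(l * V x) ≤ |(-(l * V x))| := le_abs_self _
      _ = |l| * |V x| := by rw [abs_neg, abs_mul]
      _ ≤ |l| * C := mul_le_mul_of_nonneg_left (hVbdd x) (abs_nonneg l)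
  have hpos : ∀ l : ℝ, 0 < g l := by
    intro l
    have h1 : (∫ _ : E, Real.exp (-(|l| * C)) ∂η) ≤ g l := by
      refine integral_mono (integrable_const _) (hint l) fun x => ?_
      apply Real.exp_le_exp.2
      have : l * V x ≤ |l * V x| := le_abs_self _
      have h2 : |l * V x| ≤ |l| * C := by
        rw [abs_mul]; exact mul_le_mul_of_nonneg_left (hVbdd x) (abs_nonneg l)
      nlinarith
    have h2 : (∫ _ : E, Real.exp (-(|l| * C)) ∂η) = Real.exp (-(|l| * C)) := by
      simp
    nlinarith [Real.exp_pos (-(|l| * C))]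
  -- the two-variable product functions
  set G : ℝ → ℝ → (E × E) → ℝ :=
    fun α β p => Real.exp (-(α * V p.1)) * Real.exp (-(β * V p.2)) with hGdef
  have hGint : ∀ α β : ℝ, Integrable (G α β) (η.prod η) :=
    fun α β => (hint α).mul_prod (hint β)
  have hGval : ∀ α β : ℝ, ∫ p, G α β p ∂(η.prod η) = g α * g β := by
    intro α β
    exact integral_prod_mul (fun x => Real.exp (-(α * V x))) (fun y => Real.exp (-(β * V y)))
  intro a ha b hb hab
  simp only [Set.mem_Ioi] at ha hb
  -- Claim 1 : g b ^ 2 < g a * g (2*b - a)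
  have claim1 : g b ^ 2 < g a * g (2*b - a) := by
    set F : (E × E) → ℝ := fun p =>
      (Real.exp (-((a * V p.1 + (2*b - a) * V p.2)/2))
        - Real.exp (-((a * V p.2 + (2*b - a) * V p.1)/2)))^2 with hFdef
    have hF : F = fun p => G a (2*b - a) p + G (2*b - a) a p - 2 * G b b p := by
      funext p
      have e1 : Real.exp (2 * -((a * V p.1 + (2*b - a) * V p.2)/2)) = G a (2*b - a) p := by
        simp only [hGdef]; rw [← Real.exp_add]; congr 1; ring
      have e2 : Real.exp (2 * -((a * V p.2 + (2*b - a) * V p.1)/2)) = G (2*b - a) a p := by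
        simp only [hGdef]; rw [← Real.exp_add]; congr 1; ring
      have e3 : Real.exp (-((a * V p.1 + (2*b - a) * V p.2)/2)
          + -((a * V p.2 + (2*b - a) * V p.1)/2)) = G b b p := by
        simp only [hGdef]; rw [← Real.exp_add]; congr 1; ring
      simp only [hFdef]
      rw [ess_exp_identity, e1, e2, e3]
    have hFint : Integrable F (η.prod η) := by
      rw [hF]
      exact ((hGint a (2*b - a)).add (hGint (2*b - a) a)).sub ((hGint b b).const_mul 2)
    have hFval : ∫ p, F p ∂(η.prod η) = 2 * (g a * g (2*b - a) - g b ^ 2) := by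
      simp only [hF]
      have i1 : Integrable (fun p => G a (2*b - a) p + G (2*b - a) a p) (η.prod η) :=
        (hGint a (2*b - a)).add (hGint (2*b - a) a)
      have i2 : Integrable (fun p => 2 * G b b p) (η.prod η) := (hGint b b).const_mul 2
      rw [integral_sub i1 i2, integral_add (hGint a (2*b - a)) (hGint (2*b - a) a),
        integral_const_mul, hGval, hGval, hGval]
      ring
    have hFpos : 0 < ∫ p, F p ∂(η.prod η) := by
      rw [integral_pos_iff_support_of_nonneg (fun p => sq_nonneg _) hFint]
      refine lt_of_lt_of_le hne (measure_mono ?_)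
      intro p hp
      simp only [Set.mem_setOf_eq] at hp
      simp only [Function.mem_support, hFdef]
      intro hcon
      have := pow_eq_zero_iff (n := 2) (by norm_num) |>.1 hcon
      have hexp : Real.exp (-((a * V p.1 + (2*b - a) * V p.2)/2))
          = Real.exp (-((a * V p.2 + (2*b - a) * V p.1)/2)) := by linarith
      have := Real.exp_injective hexp
      apply hp
      have h3 : (2*b - 2*a) * (V p.1 - V p.2) = 0 := by linarith
      rcases mul_eq_zero.1 h3 with h | h
      · linarith
      · linarith
    nlinarith [hFval, hFpos]
  -- Claim 2 : g (2*a) * g (2*b - a) ≤ g a * g (2*b)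
  have claim2 : g (2*a) * g (2*b - a) ≤ g a * g (2*b) := by
    set H : (E × E) → ℝ := fun p =>
      G a (2*b) p + G (2*b) a p - G (2*a) (2*b - a) p - G (2*b - a) (2*a) p with hHdef
    have hHnn : ∀ p, 0 ≤ H p := by
      intro p
      have key : H p = (Real.exp (-(a * V p.1)) - Real.exp (-(a * V p.2)))
          * (Real.exp (-((2*b - 2*a) * V p.1)) - Real.exp (-((2*b - 2*a) * V p.2)))
          * Real.exp (-(a * (V p.1 + V p.2))) := by
        rw [hHdef]
        simp only [hGdef]
        have := ess_factor_identity (V p.1) (V p.2) a b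
        convert this using 3
      rw [key]
      have hba : 0 < 2*b - 2*a := by linarith
      rcases le_total (V p.1) (V p.2) with h | h
      · refine mul_nonneg (mul_nonneg ?_ ?_) (Real.exp_pos _).le
        · rw [sub_nonneg]; exact Real.exp_le_exp.2 (by nlinarith)
        · rw [sub_nonneg]; exact Real.exp_le_exp.2 (by nlinarith)
      · have h1 : Real.exp (-(a * V p.1)) - Real.exp (-(a * V p.2)) ≤ 0 := by
          rw [sub_nonpos]; exact Real.exp_le_exp.2 (by nlinarith)
        have h2 : Real.exp (-((2*b - 2*a) * V p.1)) - Real.exp (-((2*b - 2*a) * V p.2)) ≤ 0 := by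
          rw [sub_nonpos]; exact Real.exp_le_exp.2 (by nlinarith)
        have h3 : 0 ≤ (Real.exp (-(a * V p.1)) - Real.exp (-(a * V p.2)))
            * (Real.exp (-((2*b - 2*a) * V p.1)) - Real.exp (-((2*b - 2*a) * V p.2))) := by
          nlinarith
        exact mul_nonneg h3 (Real.exp_pos _).le
    have hHval : ∫ p, H p ∂(η.prod η)
        = 2 * (g a * g (2*b) - g (2*a) * g (2*b - a)) := by
      simp only [hHdef]
      have i1 : Integrable (fun p => G a (2*b) p + G (2*b) a p) (η.prod η) :=
        (hGint a (2*b)).add (hGint (2*b) a)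
      have i2 : Integrable (fun p => G a (2*b) p + G (2*b) a p - G (2*a) (2*b - a) p)
          (η.prod η) := i1.sub (hGint (2*a) (2*b - a))
      rw [integral_sub i2 (hGint (2*b - a) (2*a)), integral_sub i1 (hGint (2*a) (2*b - a)),
        integral_add (hGint a (2*b)) (hGint (2*b) a), hGval, hGval, hGval, hGval]
      ring
    have : 0 ≤ ∫ p, H p ∂(η.prod η) := integral_nonneg hHnn
    nlinarith [hHval]
  -- assemble
  have hga := hpos a
  have hgb := hpos b
  have hg2a := hpos (2*a)
  have hg2b := hpos (2*b)
  have hg2ba := hpos (2*b - a)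
  simp only [neg_mul]
  show g b ^ 2 / g (2*b) < g a ^ 2 / g (2*a)
  rw [div_lt_div_iff₀ hg2b hg2a]
  nlinarith [mul_lt_mul_of_pos_right claim1 hg2a,
    mul_le_mul_of_nonneg_left claim2 hga.le]
end

section
/- Let f, f_N: [a, b] → ℝ be continuous functions with f_N → f uniformly (in probability), let α ∈ ℝ, and define β := inf{ x ∈ [a,b] : f(x) ≤ α } and β_N := inf{ x ∈ [a,b] : f_N(x) ≤ α } (with the convention inf ∅ = b). If f is strictly decreasing and f(a) > α > f(b), then β_N → β in probability. -/
/-!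
By the intermediate value theorem `f` crosses the level `α` at a point `c ∈ (a, b)`, and strict
monotonicity makes `{x | f x ≤ α} = [c, b]`, so the limiting hitting point is `c`. For small
`η > 0`, the margins `f (c - η) - α` and `α - f (c + η)` are positive; once `sup |F_N - f|` is
below both, `F_N` stays above `α` on `[a, c - η)` and falls below it at `c + η`, which pins the
hitting point of `F_N` to `[c - η, c + η]`. Hence `|β_N - β| ≥ ε` forces `sup |F_N - f|` to be
bounded away from `0`, an event whose probability tends to `0`.
-/

open MeasureTheory Filter Set

noncomputable def hittingPoint (a b α : ℝ) (g : ℝ → ℝ) : ℝ :=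
  sInf (insert b {x ∈ Icc a b | g x ≤ α})

section HittingPoint

variable {a b α : ℝ} {g : ℝ → ℝ}

lemma hittingPoint_le {u : ℝ} (hu : u ∈ Icc a b) (hgu : g u ≤ α) :
    hittingPoint a b α g ≤ u :=
  csInf_le ((bddBelow_Icc.mono (sep_subset _ _)).insert b) (mem_insert_of_mem _ ⟨hu, hgu⟩)

lemma le_hittingPoint {l : ℝ} (hlb : l ≤ b) (hg : ∀ x ∈ Icc a b, x < l → α < g x) :
    l ≤ hittingPoint a b α g := by
  refine le_csInf (insert_nonempty _ _) ?_
  rintro y (rfl | ⟨hy, hgy⟩)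
  · exact hlb
  · by_contra! hyl
    exact (hg y hy hyl).not_ge hgy

end HittingPoint

lemma sInf_sep_le_eq_of_strictAntiOn {a b α c : ℝ} {f : ℝ → ℝ}
    (hf : StrictAntiOn f (Icc a b)) (hc : c ∈ Icc a b) (hfc : f c = α) :
    sInf {x ∈ Icc a b | f x ≤ α} = c := by
  refine le_antisymm (csInf_le ⟨a, fun y hy => hy.1.1⟩ ⟨hc, hfc.le⟩) ?_
  refine le_csInf ⟨c, hc, hfc.le⟩ ?_
  rintro y ⟨hy, hfy⟩
  by_contra! hyc
  exact (hf hy hc hyc).not_ge (hfc ▸ hfy)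

lemma exists_dist_hittingPoint_lt {a b α c : ℝ} {f : ℝ → ℝ}
    (hf : StrictAntiOn f (Icc a b)) (hc : c ∈ Ioo a b) (hfc : f c = α)
    {ε : ℝ} (hε : 0 < ε) :
    ∃ δ > 0, ∀ g : ℝ → ℝ, (∀ x ∈ Icc a b, |g x - f x| < δ) →
      dist (hittingPoint a b α g) c < ε := by
  obtain ⟨hac, hcb⟩ := hc
  set η := min (ε / 2) (min (c - a) (b - c))
  have hη : 0 < η := lt_min (half_pos hε) (lt_min (sub_pos.2 hac) (sub_pos.2 hcb))
  have hηε : η < ε := (min_le_left _ _).trans_lt (half_lt_self hε)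
  have hηa : η ≤ c - a := (min_le_right _ _).trans (min_le_left _ _)
  have hηb : η ≤ b - c := (min_le_right _ _).trans (min_le_right _ _)
  have hcI : c ∈ Icc a b := ⟨hac.le, hcb.le⟩
  have hlI : c - η ∈ Icc a b := ⟨by linarith, by linarith⟩
  have hrI : c + η ∈ Icc a b := ⟨by linarith, by linarith⟩
  have hfl : α < f (c - η) := hfc ▸ hf hlI hcI (by linarith)
  have hfr : f (c + η) < α := hfc ▸ hf hcI hrI (by linarith)
  refine ⟨min (f (c - η) - α) (α - f (c + η)), lt_min (by linarith) (by linarith), ?_⟩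
  intro g hg
  have hδl := min_le_left (f (c - η) - α) (α - f (c + η))
  have hδr := min_le_right (f (c - η) - α) (α - f (c + η))
  have hupper : hittingPoint a b α g ≤ c + η := by
    refine hittingPoint_le hrI ?_
    linarith [(abs_lt.1 (hg _ hrI)).2]
  have hlower : c - η ≤ hittingPoint a b α g := by
    refine le_hittingPoint hlI.2 fun x hx hxl => ?_
    linarith [(abs_lt.1 (hg x hx)).1, hf hx hlI hxl]
  rw [Real.dist_eq, abs_lt]
  constructor <;> linarith

lemma ContinuousOn.le_iSup_of_isCompact {X : Type*} [TopologicalSpace X] {s : Set X}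
    (hs : IsCompact s) {h : X → ℝ} (hh : ContinuousOn h s) {x : X} (hx : x ∈ s) :
    h x ≤ ⨆ y : s, h y :=
  le_ciSup (f := fun y : s => h y) (by simpa [image_eq_range] using hs.bddAbove_image hh) ⟨x, hx⟩

theorem hitting_time_tendstoInMeasure_general {Ω : Type*} [MeasurableSpace Ω]
    (P : Measure Ω)
    (a b : ℝ) (hab : a ≤ b) (α : ℝ)
    (F : ℕ → Ω → ℝ → ℝ) (hFcont : ∀ N ω, ContinuousOn (F N ω) (Set.Icc a b))
    (f : ℝ → ℝ) (hfcont : ContinuousOn f (Set.Icc a b))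
    (hfanti : StrictAntiOn f (Set.Icc a b))
    (hfa : α < f a) (hfb : f b < α)
    (hunif : TendstoInMeasure P
      (fun N ω => ⨆ x : Set.Icc a b, |F N ω ↑x - f ↑x|)
      Filter.atTop (fun _ => (0 : ℝ))) :
    TendstoInMeasure P
      (fun N ω => sInf (insert b {x ∈ Set.Icc a b | F N ω x ≤ α}))
      Filter.atTop (fun _ => sInf {x ∈ Set.Icc a b | f x ≤ α}) := by
  obtain ⟨c, hc, hfc⟩ := intermediate_value_Ioo' hab hfcont ⟨hfb, hfa⟩
  rw [sInf_sep_le_eq_of_strictAntiOn hfanti (Ioo_subset_Icc_self hc) hfc]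
  rw [tendstoInMeasure_iff_dist] at hunif ⊢
  intro ε hε
  obtain ⟨δ, hδ, hstable⟩ := exists_dist_hittingPoint_lt hfanti hc hfc hε
  refine tendsto_of_tendsto_of_tendsto_of_le_of_le tendsto_const_nhds (hunif δ hδ)
    (fun _ => zero_le) (fun N => measure_mono fun ω hω => ?_)
  by_contra hsup
  replace hsup : |(⨆ y : Icc a b, |F N ω y - f y|)| < δ := by
    simpa only [mem_ofPred_eq, Real.dist_0_eq_abs, not_le] using hsup
  refine (hstable (F N ω) fun x hx => ?_).not_ge hω
  calc |F N ω x - f x| ≤ ⨆ y : Icc a b, |F N ω y - f y| :=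
        ((hFcont N ω).sub hfcont).abs.le_iSup_of_isCompact isCompact_Icc hx
    _ < δ := (le_abs_self _).trans_lt hsup

/-- If continuous random functions `F_N(ω,·)` converge uniformly in probability to a
continuous strictly decreasing `f` with `f(a) > α > f(b)`, then the hitting points
`β_N := inf{x ∈ [a,b] : F_N(ω,x) ≤ α}` (with `inf ∅ = b`) converge in probability to
`β := inf{x ∈ [a,b] : f(x) ≤ α}`. -/
theorem hitting_time_tendstoInMeasure {Ω : Type*} [MeasurableSpace Ω]
    (P : Measure Ω) [IsProbabilityMeasure P]
    (a b : ℝ) (hab : a ≤ b) (α : ℝ)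
    (F : ℕ → Ω → ℝ → ℝ) (hFcont : ∀ N ω, ContinuousOn (F N ω) (Set.Icc a b))
    (f : ℝ → ℝ) (hfcont : ContinuousOn f (Set.Icc a b))
    (hfanti : StrictAntiOn f (Set.Icc a b))
    (hfa : α < f a) (hfb : f b < α)
    (hmeas : ∀ N, Measurable fun ω => sInf (insert b {x ∈ Set.Icc a b | F N ω x ≤ α}))
    (hunif : TendstoInMeasure P
      (fun N ω => ⨆ x : Set.Icc a b, |F N ω ↑x - f ↑x|)
      Filter.atTop (fun _ => (0 : ℝ))) :
    TendstoInMeasure P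
      (fun N ω => sInf (insert b {x ∈ Set.Icc a b | F N ω x ≤ α}))
      Filter.atTop (fun _ => sInf {x ∈ Set.Icc a b | f x ≤ α}) :=
  hitting_time_tendstoInMeasure_general P a b hab α F hFcont f hfcont hfanti hfa hfb hunif
end

section
/- Let η be a finite measure on E and V: E → ℝ bounded measurable. Then λ ↦ ESS(η, e^{-λV}) = η(e^{-λV})²/η(e^{-2λV}) is continuous on [0, ∞) with a continuous derivative, and its derivative at λ equals −2 [η(e^{-2λV}) η(V e^{-λV}) η(e^{-λV}) − η(e^{-λV})² η(V e^{-2λV})] / η(e^{-2λV})²; in particular d/dλ ESS(η, e^{-λV}) ≤ 0. -/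
open MeasureTheory

lemma bdd_integrable {E : Type*} [MeasurableSpace E] (η : Measure E) [IsFiniteMeasure η]
    (h : E → ℝ) (hm : AEStronglyMeasurable h η) (K : ℝ) (hK : ∀ x, |h x| ≤ K) :
    Integrable h η :=
  (integrable_const K).mono' hm (Filter.Eventually.of_forall fun x => by
    simpa [Real.norm_eq_abs] using hK x)

lemma exp_mul_bound (c C : ℝ) (v : ℝ) (hv : |v| ≤ C) :
    Real.exp (c * v) ≤ Real.exp (|c| * C) := by
  apply Real.exp_le_exp.mpr
  calc c * v ≤ |c * v| := le_abs_self _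
  _ = |c| * |v| := abs_mul c v
  _ ≤ |c| * C := by nlinarith [abs_nonneg c, abs_nonneg v]

lemma integrable_mul_exp {E : Type*} [MeasurableSpace E] (η : Measure E) [IsFiniteMeasure η]
    (V g : E → ℝ) (hV : Measurable V) (hg : Measurable g)
    (C Cg : ℝ) (hC : ∀ x, |V x| ≤ C) (hCg : ∀ x, |g x| ≤ Cg) (c : ℝ) :
    Integrable (fun x => g x * Real.exp (c * V x)) η := by
  refine bdd_integrable η _ ((hg.mul ((hV.const_mul c).exp)).aestronglyMeasurable)
    (Cg * Real.exp (|c| * C)) fun x => ?_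
  rw [abs_mul, abs_of_pos (Real.exp_pos _)]
  have h1 := exp_mul_bound c C (V x) (hC x)
  have h2 := hCg x
  have h3 := abs_nonneg (g x)
  nlinarith [Real.exp_pos (c * V x)]

lemma integrable_exp_mul {E : Type*} [MeasurableSpace E] (η : Measure E) [IsFiniteMeasure η]
    (V : E → ℝ) (hV : Measurable V) (C : ℝ) (hC : ∀ x, |V x| ≤ C) (c : ℝ) :
    Integrable (fun x => Real.exp (c * V x)) η := by
  simpa using integrable_mul_exp η V (fun _ => 1) hV measurable_const C 1 hC (fun _ => by norm_num) c

lemma integral_exp_mul_pos {E : Type*} [MeasurableSpace E] (η : Measure E) [IsFiniteMeasure η]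
    (hη : η ≠ 0) (V : E → ℝ) (hV : Measurable V) (C : ℝ) (hC : ∀ x, |V x| ≤ C) (c : ℝ) :
    0 < ∫ x, Real.exp (c * V x) ∂η := by
  have htr : 0 < (η Set.univ).toReal :=
    ENNReal.toReal_pos (Measure.measure_univ_pos.mpr hη).ne' (measure_ne_top η _)
  have hmono : ∀ x, Real.exp (-(|c| * C)) ≤ Real.exp (c * V x) := by
    intro x
    apply Real.exp_le_exp.mpr
    have h1 := neg_abs_le (c * V x)
    have h2 := abs_mul c (V x)
    have h3 := hC x
    nlinarith [abs_nonneg c]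
  calc (0:ℝ) < (η Set.univ).toReal * Real.exp (-(|c| * C)) := by positivity
  _ = ∫ _x, Real.exp (-(|c| * C)) ∂η := by rw [integral_const, smul_eq_mul]; rfl
  _ ≤ ∫ x, Real.exp (c * V x) ∂η :=
      integral_mono (integrable_const _) (integrable_exp_mul η V hV C hC c) hmono

lemma deriv_aux {E : Type*} [MeasurableSpace E] (η : Measure E) [IsFiniteMeasure η]
    (V g : E → ℝ) (hV : Measurable V) (hg : Measurable g)
    (C Cg : ℝ) (hC : ∀ x, |V x| ≤ C) (hCg : ∀ x, |g x| ≤ Cg) (l : ℝ) :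
    HasDerivAt (fun l => ∫ x, g x * Real.exp (-l * V x) ∂η)
      (-∫ x, g x * V x * Real.exp (-l * V x) ∂η) l := by
  have key := hasDerivAt_integral_of_dominated_loc_of_deriv_le (μ := η)
    (F := fun m x => g x * Real.exp (-m * V x))
    (F' := fun m x => -(g x * V x * Real.exp (-m * V x)))
    (x₀ := l) (bound := fun _ => Cg * (C * Real.exp ((|l| + 1) * C)))
    (s := Metric.ball l 1) (Metric.ball_mem_nhds l one_pos)
    (Filter.Eventually.of_forall fun m =>
      (hg.mul ((hV.const_mul (-m)).exp)).aestronglyMeasurable)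
    (integrable_mul_exp η V g hV hg C Cg hC hCg (-l))
    (((hg.mul hV).mul ((hV.const_mul (-l)).exp)).neg.aestronglyMeasurable)
    (Filter.Eventually.of_forall fun x => fun m hm => ?_)
    (integrable_const _)
    (Filter.Eventually.of_forall fun x => fun m _ => ?_)
  · have h1 : (fun x_1 => ∫ (a : E), g a * Real.exp (-x_1 * V a) ∂η) =
        fun m => ∫ x, g x * Real.exp (-m * V x) ∂η := rfl
    have h2 : ∫ (a : E), -(g a * V a * Real.exp (-l * V a)) ∂η =
        -∫ x, g x * V x * Real.exp (-l * V x) ∂η := integral_neg _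
    rw [← h2]
    exact key.2
  · -- bound
    have hm' : |m - l| < 1 := by
      have := hm
      rw [Metric.mem_ball, Real.dist_eq] at this
      exact this
    have hVx := hC x
    have hVx0 : 0 ≤ |V x| := abs_nonneg _
    have hgx := hCg x
    have hgx0 : 0 ≤ |g x| := abs_nonneg _
    have hexp : Real.exp (-m * V x) ≤ Real.exp ((|l| + 1) * C) := by
      apply Real.exp_le_exp.mpr
      have h1 : -m * V x ≤ |m| * |V x| := by
        calc -m * V x ≤ |(-m) * V x| := le_abs_self _
        _ = |m| * |V x| := by rw [abs_mul, abs_neg]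
      have h2 : |m| ≤ |l| + 1 := by
        have := abs_sub_abs_le_abs_sub m l
        linarith
      have h3 : |m| * |V x| ≤ (|l| + 1) * C :=
        mul_le_mul h2 hVx hVx0 (by positivity)
      linarith
    rw [norm_neg, Real.norm_eq_abs, abs_mul, abs_mul, abs_of_pos (Real.exp_pos _)]
    show |g x| * |V x| * Real.exp (-m * V x) ≤ Cg * (C * Real.exp ((|l| + 1) * C))
    have hCg0 : 0 ≤ Cg := le_trans hgx0 hgx
    have hC0 : 0 ≤ C := le_trans hVx0 hVx
    have hc1 : |g x| * |V x| ≤ Cg * C := mul_le_mul hgx hVx hVx0 hCg0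
    have hc2 := mul_le_mul hc1 hexp (Real.exp_pos _).le (by positivity)
    linarith
  · -- differentiability in m at each x
    have h1 : HasDerivAt (fun m : ℝ => -m * V x) (-V x) m := by
      simpa using ((hasDerivAt_id m).neg.mul_const (V x))
    have h2 := (h1.exp).const_mul (g x)
    convert h2 using 1
    · rfl
    ring

lemma key_ineq {E : Type*} [MeasurableSpace E] (η : Measure E) [IsFiniteMeasure η]
    (V : E → ℝ) (hV : Measurable V) (C : ℝ) (hC : ∀ x, |V x| ≤ C) (l : ℝ) (hl : 0 ≤ l) :
    (∫ x, Real.exp (-l * V x) ∂η) * ∫ x, V x * Real.exp (-l * V x) ^ 2 ∂η ≤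
      (∫ x, Real.exp (-l * V x) ^ 2 ∂η) * ∫ x, V x * Real.exp (-l * V x) ∂η := by
  set f : E → ℝ := fun x => Real.exp (-l * V x) with hfdef
  have hfm : Measurable f := (hV.const_mul (-l)).exp
  have hfsq : ∀ x, f x ^ 2 = Real.exp (-(2 * l) * V x) := by
    intro x
    rw [hfdef, pow_two, ← Real.exp_add]
    congr 1
    ring
  -- integrabilities
  have hif : Integrable f η := integrable_exp_mul η V hV C hC (-l)
  have hif2 : Integrable (fun x => f x ^ 2) η := by
    have := integrable_exp_mul η V hV C hC (-(2 * l))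
    refine this.congr (Filter.Eventually.of_forall fun x => ?_)
    exact (hfsq x).symm
  have hiVf : Integrable (fun x => V x * f x) η :=
    integrable_mul_exp η V V hV hV C C hC hC (-l)
  have hiVf2 : Integrable (fun x => V x * f x ^ 2) η := by
    have := integrable_mul_exp η V V hV hV C C hC hC (-(2 * l))
    refine this.congr (Filter.Eventually.of_forall fun x => ?_)
    show V x * Real.exp (-(2 * l) * V x) = V x * f x ^ 2
    rw [hfsq x]
  have hsign : ∀ a b : ℝ, (b - a) * (Real.exp (-l * b) - Real.exp (-l * a)) ≤ 0 := by
    intro a b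
    rcases le_total a b with h | h
    · have : Real.exp (-l * b) ≤ Real.exp (-l * a) := Real.exp_le_exp.mpr (by nlinarith)
      nlinarith
    · have : Real.exp (-l * a) ≤ Real.exp (-l * b) := Real.exp_le_exp.mpr (by nlinarith)
      nlinarith
  have hIle : ∫ p : E × E, (f p.1 * (V p.2 * f p.2 ^ 2) + (V p.1 * f p.1 ^ 2) * f p.2
      - (f p.1 ^ 2 * (V p.2 * f p.2) + (V p.1 * f p.1) * f p.2 ^ 2)) ∂(η.prod η) ≤ 0 := by
    apply integral_nonpos
    intro p
    have h1 : 0 ≤ f p.1 * f p.2 := by positivity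
    have h2 := hsign (V p.1) (V p.2)
    have h3 : f p.1 * f p.2 * ((V p.2 - V p.1) * (f p.2 - f p.1)) ≤ 0 :=
      mul_nonpos_of_nonneg_of_nonpos h1 h2
    show f p.1 * (V p.2 * f p.2 ^ 2) + (V p.1 * f p.1 ^ 2) * f p.2
      - (f p.1 ^ 2 * (V p.2 * f p.2) + (V p.1 * f p.1) * f p.2 ^ 2) ≤ 0
    nlinarith [h3]
  have hIeq : ∫ p : E × E, (f p.1 * (V p.2 * f p.2 ^ 2) + (V p.1 * f p.1 ^ 2) * f p.2
      - (f p.1 ^ 2 * (V p.2 * f p.2) + (V p.1 * f p.1) * f p.2 ^ 2)) ∂(η.prod η)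
      = ((∫ x, f x ∂η) * ∫ x, V x * f x ^ 2 ∂η + (∫ x, V x * f x ^ 2 ∂η) * ∫ x, f x ∂η)
        - ((∫ x, f x ^ 2 ∂η) * (∫ x, V x * f x ∂η) + (∫ x, V x * f x ∂η) * ∫ x, f x ^ 2 ∂η) := by
    have h12 : Integrable (fun p : E × E => f p.1 * (V p.2 * f p.2 ^ 2)
        + (V p.1 * f p.1 ^ 2) * f p.2) (η.prod η) := (hif.mul_prod hiVf2).add (hiVf2.mul_prod hif)
    have h34 : Integrable (fun p : E × E => f p.1 ^ 2 * (V p.2 * f p.2)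
        + (V p.1 * f p.1) * f p.2 ^ 2) (η.prod η) := (hif2.mul_prod hiVf).add (hiVf.mul_prod hif2)
    have h1 : Integrable (fun p : E × E => f p.1 * (V p.2 * f p.2 ^ 2)) (η.prod η) :=
      hif.mul_prod hiVf2
    have h2 : Integrable (fun p : E × E => (V p.1 * f p.1 ^ 2) * f p.2) (η.prod η) :=
      hiVf2.mul_prod hif
    have h3 : Integrable (fun p : E × E => f p.1 ^ 2 * (V p.2 * f p.2)) (η.prod η) :=
      hif2.mul_prod hiVf
    have h4 : Integrable (fun p : E × E => (V p.1 * f p.1) * f p.2 ^ 2) (η.prod η) :=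
      hiVf.mul_prod hif2
    rw [integral_sub h12 h34, integral_add h1 h2, integral_add h3 h4,
      integral_prod_mul f (fun x => V x * f x ^ 2),
      integral_prod_mul (fun x => V x * f x ^ 2) f,
      integral_prod_mul (fun x => f x ^ 2) (fun x => V x * f x),
      integral_prod_mul (fun x => V x * f x) (fun x => f x ^ 2)]
  rw [hIeq] at hIle
  linarith

/-- For a finite measure `η` and bounded measurable `V`, the map
`λ ↦ ESS(η, e^{-λV}) = η(e^{-λV})²/η(e^{-2λV})` is continuous on `[0,∞)` with a
continuous derivative, given by
`2[η(e^{-λV})² η(V e^{-2λV}) − η(e^{-λV}) η(e^{-2λV}) η(V e^{-λV})]/η(e^{-2λV})²`,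
which is non-positive. -/
theorem ess_hasDerivAt_nonpos {E : Type*} [MeasurableSpace E] (η : Measure E)
    [IsFiniteMeasure η]
    (V : E → ℝ) (hV : Measurable V) (C : ℝ) (hC : ∀ x, |V x| ≤ C) :
    let A : ℝ → ℝ := fun l => ∫ x, Real.exp (-l * V x) ∂η
    let B : ℝ → ℝ := fun l => ∫ x, Real.exp (-(2 * l) * V x) ∂η
    let C1 : ℝ → ℝ := fun l => ∫ x, V x * Real.exp (-l * V x) ∂η
    let C2 : ℝ → ℝ := fun l => ∫ x, V x * Real.exp (-(2 * l) * V x) ∂η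
    let ESS : ℝ → ℝ := fun l => (A l) ^ 2 / B l
    let Dv : ℝ → ℝ := fun l => 2 * ((A l) ^ 2 * C2 l - A l * B l * C1 l) / (B l) ^ 2
    ContinuousOn ESS (Set.Ici 0) ∧ ContinuousOn Dv (Set.Ici 0) ∧
    ∀ l ∈ Set.Ici (0 : ℝ), HasDerivAt ESS (Dv l) l ∧ Dv l ≤ 0 := by
  intro A B C1 C2 ESS Dv
  have hAd : A = fun l => ∫ x, Real.exp (-l * V x) ∂η := rfl
  have hBd : B = fun l => ∫ x, Real.exp (-(2 * l) * V x) ∂η := rfl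
  have hC1d : C1 = fun l => ∫ x, V x * Real.exp (-l * V x) ∂η := rfl
  have hC2d : C2 = fun l => ∫ x, V x * Real.exp (-(2 * l) * V x) ∂η := rfl
  have hESSd : ESS = fun l => (A l) ^ 2 / B l := rfl
  have hDvd : Dv = fun l => 2 * ((A l) ^ 2 * C2 l - A l * B l * C1 l) / (B l) ^ 2 := rfl
  rcases eq_or_ne η 0 with rfl | hη
  · have hA0 : A = fun _ => (0 : ℝ) := by
      rw [hAd]; funext m; simp
    have hESS0 : ESS = fun _ => (0 : ℝ) := by
      rw [hESSd, hA0, hBd]; funext m; simp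
    have hDv0 : Dv = fun _ => (0 : ℝ) := by
      rw [hDvd, hA0, hBd, hC1d, hC2d]; funext m; simp
    refine ⟨by rw [hESS0]; exact continuousOn_const, by rw [hDv0]; exact continuousOn_const,
      fun l _ => ⟨?_, ?_⟩⟩
    · rw [hESS0, hDv0]; exact hasDerivAt_const l 0
    · rw [hDv0]
  -- nonzero measure
  have hA' : ∀ m : ℝ, HasDerivAt A (-(C1 m)) m := by
    intro m
    have h := deriv_aux η V (fun _ => 1) hV measurable_const C 1 hC (fun _ => by norm_num) m
    simp only [one_mul] at h
    exact h
  have hB' : ∀ m : ℝ, HasDerivAt B (-(2 * C2 m)) m := by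
    intro m
    have hf2 : HasDerivAt (fun l : ℝ => 2 * l) 2 m := by
      simpa using (hasDerivAt_id m).const_mul 2
    have h := HasDerivAt.comp m (hA' (2 * m)) hf2
    have : HasDerivAt B (-(C1 (2 * m)) * 2) m := h
    convert this using 1
    have : C1 (2 * m) = C2 m := rfl
    rw [this]; ring
  have hC1' : ∀ m : ℝ, HasDerivAt C1 (-∫ x, V x * V x * Real.exp (-m * V x) ∂η) m :=
    fun m => deriv_aux η V V hV hV C C hC hC m
  have contA : Continuous A := by
    rw [continuous_iff_continuousAt]; exact fun m => (hA' m).continuousAt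
  have contB : Continuous B := by
    rw [continuous_iff_continuousAt]; exact fun m => (hB' m).continuousAt
  have contC1 : Continuous C1 := by
    rw [continuous_iff_continuousAt]; exact fun m => (hC1' m).continuousAt
  have contC2 : Continuous C2 := by
    have h := contC1.comp (continuous_const.mul continuous_id : Continuous fun l : ℝ => 2 * l)
    exact h
  have hBpos : ∀ m : ℝ, 0 < B m := fun m =>
    integral_exp_mul_pos η hη V hV C hC (-(2 * m))
  have hApos : ∀ m : ℝ, 0 < A m := fun m =>
    integral_exp_mul_pos η hη V hV C hC (-m)
  have hEderiv : ∀ m : ℝ, HasDerivAt ESS (Dv m) m := by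
    intro m
    have h := ((hA' m).pow 2).div (hB' m) (hBpos m).ne'
    convert h using 1
    · rfl
    · rfl
    · rfl
    rw [hDvd]
    show 2 * ((A m) ^ 2 * C2 m - A m * B m * C1 m) / (B m) ^ 2 = _
    push_cast
    simp only [Pi.pow_apply]
    ring_nf
  refine ⟨?_, ?_, fun l hl => ⟨hEderiv l, ?_⟩⟩
  · exact ((contA.pow 2).div contB fun m => (hBpos m).ne').continuousOn
  · exact ((continuous_const.mul (((contA.pow 2).mul contC2).sub
      ((contA.mul contB).mul contC1))).div (contB.pow 2)
      fun m => pow_ne_zero 2 (hBpos m).ne').continuousOn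
  · -- nonpositivity
    have key := key_ineq η V hV C hC l hl
    have hBf : B l = ∫ x, Real.exp (-l * V x) ^ 2 ∂η := by
      rw [hBd]
      refine integral_congr_ae (Filter.Eventually.of_forall fun x => ?_)
      show Real.exp (-(2 * l) * V x) = Real.exp (-l * V x) ^ 2
      rw [pow_two, ← Real.exp_add]; congr 1; ring
    have hC2f : C2 l = ∫ x, V x * Real.exp (-l * V x) ^ 2 ∂η := by
      rw [hC2d]
      refine integral_congr_ae (Filter.Eventually.of_forall fun x => ?_)
      show V x * Real.exp (-(2 * l) * V x) = V x * Real.exp (-l * V x) ^ 2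
      rw [pow_two, ← Real.exp_add]
      congr 2
      ring
    have key' : A l * C2 l ≤ B l * C1 l := by
      rw [hBf, hC2f, hAd, hC1d]
      exact key
    have hA0 := (hApos l).le
    have hnum : 2 * ((A l) ^ 2 * C2 l - A l * B l * C1 l) ≤ 0 := by
      nlinarith [mul_le_mul_of_nonneg_left key' hA0]
    rw [hDvd]
    show 2 * ((A l) ^ 2 * C2 l - A l * B l * C1 l) / (B l) ^ 2 ≤ 0
    apply div_nonpos_of_nonpos_of_nonneg hnum
    positivity
end
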